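/- arXiv:1504.07766 — 7 statements merged into one kernel-verified Lean document; each statement's English description precedes it below -/
import Mathlib

section
/- Let M be an N×N real matrix with nonnegative entries, and let u, v be nonnegative vectors in ℝ^N such that every entry of Me + u is strictly positive and vᵀe > 0. Let M̂ be the (N+1)×(N+1) block matrix [[M, u],[vᵀ, 0]], P = diag(M̂e)^{-1} M̂, and D(u) = diag(Me + u)^{-1}. Then a vector x̄ ∈ ℝ^N satisfies the linear system (I − Mᵀ D(u)) x̄ = v if and only if the vector x = (x̄, vᵀe) ∈ ℝ^{N+1} satisfies xᵀ = xᵀP. -/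
/-- Row-normalization `P = diag(M̂e)⁻¹ M̂` of a matrix. -/
noncomputable def rowNorm {ι : Type*} [Fintype ι] [DecidableEq ι] (A : Matrix ι ι ℝ) :
    Matrix ι ι ℝ :=
  Matrix.diagonal (fun i => (∑ j, A i j)⁻¹) * A

/-- The `(N+1)×(N+1)` block matrix `M̂ = [[M, u],[vᵀ, 0]]`. -/
def hatM {N : ℕ} (M : Matrix (Fin N) (Fin N) ℝ) (u v : Fin N → ℝ) :
    Matrix (Fin N ⊕ Unit) (Fin N ⊕ Unit) ℝ := fun i j =>
  match i, j with
  | Sum.inl a, Sum.inl b => M a b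
  | Sum.inl a, Sum.inr _ => u a
  | Sum.inr _, Sum.inl b => v b
  | Sum.inr _, Sum.inr _ => 0

/-- `D(u) = diag(Me + u)⁻¹`, the diagonal matrix with entries `1/((Me)_i + u_i)`. -/
noncomputable def Du {N : ℕ} (M : Matrix (Fin N) (Fin N) ℝ) (u : Fin N → ℝ) :
    Matrix (Fin N) (Fin N) ℝ :=
  Matrix.diagonal fun i => ((∑ j, M i j) + u i)⁻¹

/-!
The row sums of `M̂` are `Me + u` and `vᵀe`, so the first `N` coordinates of `xᵀP` are
`Mᵀ D(u) x̄ + v` (the last coordinate `vᵀe` of `x` cancels the normalization of the last row)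
and the last one is `uᵀ D(u) x̄`. Hence the first `N` equations of `xᵀ = xᵀP` are exactly
`(I − Mᵀ D(u)) x̄ = v`, and the last one follows from them: since `D(u)(Me + u) = e`, the column
sums of `I − Mᵀ D(u)` are the entries of `D(u) u`, so summing the system gives `uᵀ D(u) x̄ = vᵀe`.
-/

open Matrix

lemma rowNorm_apply {ι : Type*} [Fintype ι] [DecidableEq ι] (A : Matrix ι ι ℝ) (i j : ι) :
    rowNorm A i j = (∑ k, A i k)⁻¹ * A i j := by
  simp [rowNorm, diagonal_mul]

section hatM

variable {N : ℕ} (M : Matrix (Fin N) (Fin N) ℝ) (u v : Fin N → ℝ)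

lemma mulVec_one_add_vecMul_Du (hs : ∀ i, ∑ j, M i j + u i ≠ 0) :
    (M *ᵥ 1 + u) ᵥ* Du M u = 1 := by
  ext i
  simp [Du, vecMul_diagonal, mulVec, dotProduct, hs i]

lemma sum_one_sub_transpose_mul_Du_mulVec (hs : ∀ i, ∑ j, M i j + u i ≠ 0) (x : Fin N → ℝ) :
    ∑ i, ((1 - Mᵀ * Du M u) *ᵥ x) i = u ⬝ᵥ (Du M u *ᵥ x) := by
  have hcols : 1 ᵥ* (1 - Mᵀ * Du M u) = u ᵥ* Du M u :=
    calc 1 ᵥ* (1 - Mᵀ * Du M u) = (M *ᵥ 1 + u) ᵥ* Du M u - (M *ᵥ 1) ᵥ* Du M u := by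
          rw [mulVec_one_add_vecMul_Du M u hs, vecMul_sub, vecMul_one, ← vecMul_vecMul,
            vecMul_transpose]
      _ = u ᵥ* Du M u := by rw [add_vecMul, add_sub_cancel_left]
  rw [← one_dotProduct, dotProduct_mulVec, hcols, ← dotProduct_mulVec]

lemma vecMul_rowNorm_hatM_comp_inl (hv : ∑ i, v i ≠ 0) (x : Fin N → ℝ) :
    (Sum.elim x (fun _ => ∑ i, v i) ᵥ* rowNorm (hatM M u v)) ∘ Sum.inl
      = (Mᵀ * Du M u) *ᵥ x + v := by
  ext b
  simp [vecMul, dotProduct, Fintype.sum_sum_type, rowNorm_apply, hatM, Du, mulVec, mul_diagonal,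
    hv, mul_comm, mul_left_comm]

lemma vecMul_rowNorm_hatM_comp_inr (c : ℝ) (x : Fin N → ℝ) :
    (Sum.elim x (fun _ => c) ᵥ* rowNorm (hatM M u v)) ∘ Sum.inr
      = fun _ => u ⬝ᵥ (Du M u *ᵥ x) := by
  ext t
  simp [vecMul, dotProduct, Fintype.sum_sum_type, rowNorm_apply, hatM, Du, mulVec_diagonal,
    mul_comm, mul_left_comm]

end hatM

theorem stmt_6_general {N : ℕ} (M : Matrix (Fin N) (Fin N) ℝ) (u v : Fin N → ℝ)
    (hpos : ∀ i, 0 < (∑ j, M i j) + u i) (hve : 0 < ∑ i, v i)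
    (xbar : Fin N → ℝ) :
    Matrix.mulVec (1 - M.transpose * Du M u) xbar = v ↔
      Matrix.vecMul (Sum.elim xbar fun _ => ∑ i, v i) (rowNorm (hatM M u v)) =
        Sum.elim xbar (fun _ => ∑ i, v i) := by
  have hs : ∀ i, ∑ j, M i j + u i ≠ 0 := fun i => (hpos i).ne'
  have hfirst : (1 - Mᵀ * Du M u) *ᵥ xbar = v ↔ (Mᵀ * Du M u) *ᵥ xbar + v = xbar := by
    rw [sub_mulVec, one_mulVec, sub_eq_iff_eq_add', eq_comm]
  rw [← Sum.elim_comp_inl_inr (_ ᵥ* _), Sum.elim_eq_iff,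
    vecMul_rowNorm_hatM_comp_inl M u v hve.ne', vecMul_rowNorm_hatM_comp_inr, ← hfirst]
  refine ⟨fun h => ⟨h, funext fun _ => ?_⟩, And.left⟩
  rw [← sum_one_sub_transpose_mul_Du_mulVec M u hs, h]

theorem stmt_6 {N : ℕ} (M : Matrix (Fin N) (Fin N) ℝ) (u v : Fin N → ℝ)
    (hM : ∀ i j, 0 ≤ M i j) (hu : ∀ i, 0 ≤ u i) (hv : ∀ i, 0 ≤ v i)
    (hpos : ∀ i, 0 < (∑ j, M i j) + u i) (hve : 0 < ∑ i, v i)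
    (xbar : Fin N → ℝ) :
    Matrix.mulVec (1 - M.transpose * Du M u) xbar = v ↔
      Matrix.vecMul (Sum.elim xbar fun _ => ∑ i, v i) (rowNorm (hatM M u v)) =
        Sum.elim xbar (fun _ => ∑ i, v i) :=
  stmt_6_general M u v hpos hve xbar
end

section
/- Let M be an N×N real matrix with nonnegative entries and let u ∈ ℝ^N have strictly positive entries, and set D(u) = diag(Me + u)^{-1} and ρ = max_i (Me)_i / ((Me)_i + u_i). Then ρ < 1 and for every vector y ∈ ℝ^N one has ‖ (D(u)M)ᵀ y ‖₁ ≤ ρ ‖y‖₁, i.e. the map yᵀ ↦ yᵀ D(u) M is a contraction on ℝ^N in the 1-norm with contraction factor ρ. -/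
theorem stmt_8 {N : ℕ} (M : Matrix (Fin N) (Fin N) ℝ) (u : Fin N → ℝ)
    (hM : ∀ i j, 0 ≤ M i j) (hu : ∀ i, 0 < u i) :
    (⨆ i : Fin N, (∑ j, M i j) / ((∑ j, M i j) + u i)) < 1 ∧
      ∀ y : Fin N → ℝ,
        ∑ i, |Matrix.vecMul y (Du M u * M) i| ≤
          (⨆ i : Fin N, (∑ j, M i j) / ((∑ j, M i j) + u i)) * ∑ i, |y i| := by
  set s : Fin N → ℝ := fun i => ∑ j, M i j with hs
  have hs0 : ∀ i, 0 ≤ s i := fun i => Finset.sum_nonneg fun j _ => hM i j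
  have ht : ∀ i, 0 < s i + u i := fun i => add_pos_of_nonneg_of_pos (hs0 i) (hu i)
  have hlt1 : ∀ i, s i / (s i + u i) < 1 := fun i =>
    (div_lt_one (ht i)).mpr (lt_add_of_pos_right _ (hu i))
  have hbdd : BddAbove (Set.range fun i => s i / (s i + u i)) :=
    (Set.finite_range _).bddAbove
  have hle : ∀ i, s i / (s i + u i) ≤ ⨆ i, s i / (s i + u i) := fun i =>
    le_ciSup hbdd i
  constructor
  · rcases isEmpty_or_nonempty (Fin N) with h | h
    · simp [Real.iSup_of_isEmpty]
    · obtain ⟨i0, hi0⟩ := Finite.exists_max fun i => s i / (s i + u i)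
      exact lt_of_le_of_lt (ciSup_le hi0) (hlt1 i0)
  · intro y
    have hρ0 : (0:ℝ) ≤ ⨆ i, s i / (s i + u i) := by
      rcases isEmpty_or_nonempty (Fin N) with h | h
      · simp [Real.iSup_of_isEmpty]
      · exact le_trans (div_nonneg (hs0 h.some) (ht h.some).le) (hle h.some)
    have hentry : ∀ i j, (Du M u * M) i j = (s i + u i)⁻¹ * M i j := by
      intro i j
      simp [Du, Matrix.diagonal_mul, hs]
    calc ∑ j, |Matrix.vecMul y (Du M u * M) j|
        ≤ ∑ j, ∑ i, |y i| * ((s i + u i)⁻¹ * M i j) := by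
          apply Finset.sum_le_sum
          intro j _
          rw [Matrix.vecMul]
          simp only [dotProduct, Matrix.transpose_apply, hentry]
          refine le_trans (Finset.abs_sum_le_sum_abs _ _) ?_
          apply Finset.sum_le_sum
          intro i _
          rw [abs_mul]
          gcongr
          exact le_of_eq (abs_of_nonneg (mul_nonneg (inv_nonneg.mpr (ht i).le) (hM i j)))
      _ = ∑ i, |y i| * (s i / (s i + u i)) := by
          rw [Finset.sum_comm]
          refine Finset.sum_congr rfl fun i _ => ?_
          rw [← Finset.mul_sum, ← Finset.mul_sum, div_eq_inv_mul, mul_comm (s i + u i)⁻¹]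
      _ ≤ ∑ i, |y i| * (⨆ i, s i / (s i + u i)) := by
          apply Finset.sum_le_sum
          intro i _
          exact mul_le_mul_of_nonneg_left (hle i) (abs_nonneg _)
      _ = (⨆ i, s i / (s i + u i)) * ∑ i, |y i| := by
          rw [← Finset.sum_mul, mul_comm]
end

section
/- Let M be an N×N real matrix with nonnegative entries and let u ∈ ℝ^N have strictly positive entries, and set D(u) = diag(Me + u)^{-1}. Then the matrix I − Mᵀ D(u) is invertible; consequently, for every v ∈ ℝ^N the linear system (I − Mᵀ D(u)) x̄ = v has a unique solution. -/
/-!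
`Mᵀ D(u)` has nonnegative entries and its `k`-th column sums to `(Me)_k / ((Me)_k + u_k) < 1`,
so `I - Mᵀ D(u)` is strictly diagonally dominant by columns and hence nonsingular
by the Gershgorin circle theorem.
-/

namespace Matrix

variable {n : Type*} [Fintype n] [DecidableEq n]

theorem isUnit_one_sub_of_sum_norm_col_lt_one {K : Type*} [NormedField K] (A : Matrix n n K)
    (hA : ∀ k, ∑ i, ‖A i k‖ < 1) : IsUnit (1 - A) := by
  rw [isUnit_iff_isUnit_det, isUnit_iff_ne_zero]
  refine det_ne_zero_of_sum_col_lt_diag fun k => ?_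
  have off_diag : ∀ i ∈ Finset.univ.erase k, ‖(1 - A) i k‖ = ‖A i k‖ := fun i hi => by
    rw [sub_apply, one_apply_ne (Finset.ne_of_mem_erase hi), zero_sub, norm_neg]
  calc ∑ i ∈ Finset.univ.erase k, ‖(1 - A) i k‖
      = ∑ i, ‖A i k‖ - ‖A k k‖ := by
        rw [Finset.sum_congr rfl off_diag, Finset.sum_erase_eq_sub (Finset.mem_univ k)]
    _ < ‖(1 : K)‖ - ‖A k k‖ := by rw [norm_one]; linarith [hA k]
    _ ≤ ‖(1 - A) k k‖ := by rw [sub_apply, one_apply_eq]; exact norm_sub_norm_le _ _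

theorem existsUnique_mulVec_eq_of_isUnit {R : Type*} [CommRing R] {A : Matrix n n R}
    (hA : IsUnit A) (v : n → R) : ∃! x, A *ᵥ x = v :=
  Function.Bijective.existsUnique
    ⟨mulVec_injective_of_isUnit hA, mulVec_surjective_iff_isUnit.mpr hA⟩ v

end Matrix

theorem transpose_mul_Du_apply {N : ℕ} (M : Matrix (Fin N) (Fin N) ℝ) (u : Fin N → ℝ)
    (i k : Fin N) : (M.transpose * Du M u) i k = M k i / ((∑ j, M k j) + u k) := by
  rw [Du, Matrix.mul_diagonal, Matrix.transpose_apply, div_eq_mul_inv]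

theorem sum_norm_col_transpose_mul_Du_lt_one {N : ℕ} (M : Matrix (Fin N) (Fin N) ℝ)
    (u : Fin N → ℝ) (hM : ∀ i j, 0 ≤ M i j) (hu : ∀ i, 0 < u i) (k : Fin N) :
    ∑ i, ‖(M.transpose * Du M u) i k‖ < 1 := by
  have hrow : 0 ≤ ∑ j, M k j := Finset.sum_nonneg fun j _ => hM k j
  have hden : 0 < (∑ j, M k j) + u k := by linarith [hu k]
  simp_rw [transpose_mul_Du_apply, Real.norm_eq_abs, abs_of_nonneg (div_nonneg (hM k _) hden.le),
    ← Finset.sum_div]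
  rw [div_lt_one hden]
  linarith [hu k]

theorem stmt_9 {N : ℕ} (M : Matrix (Fin N) (Fin N) ℝ) (u : Fin N → ℝ)
    (hM : ∀ i j, 0 ≤ M i j) (hu : ∀ i, 0 < u i) :
    IsUnit (1 - M.transpose * Du M u) ∧
      ∀ v : Fin N → ℝ, ∃! xbar : Fin N → ℝ,
        Matrix.mulVec (1 - M.transpose * Du M u) xbar = v := by
  have hunit : IsUnit (1 - M.transpose * Du M u) :=
    Matrix.isUnit_one_sub_of_sum_norm_col_lt_one _ (sum_norm_col_transpose_mul_Du_lt_one M u hM hu)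
  exact ⟨hunit, Matrix.existsUnique_mulVec_eq_of_isUnit hunit⟩
end

section
/- Let M be an N×N real matrix with nonnegative entries and let u ∈ ℝ^N have strictly positive entries, and set D(u) = diag(Me + u)^{-1}. Then the Neumann series ∑_{k=0}^{∞} (Mᵀ D(u))^k converges and its sum equals (I − Mᵀ D(u))^{-1}. -/
namespace Matrix

variable {n 𝕜 : Type*} [Fintype n] [DecidableEq n] [NormedField 𝕜] [CompleteSpace 𝕜]

theorem hasSum_pow_of_row_sum_norm_lt_one (A : Matrix n n 𝕜) (hA : ∀ i, ∑ j, ‖A i j‖ < 1) :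
    HasSum (fun k => A ^ k) (1 - A)⁻¹ := by
  let := Matrix.linftyOpNormedRing (n := n) (α := 𝕜)
  -- the `ℓ∞`-operator norm induces the product uniformity, so completeness is that of `n → n → 𝕜`
  have : HasSummableGeomSeries (Matrix n n 𝕜) :=
    @instHasSummableGeomSeriesOfCompleteSpace _ _ (inferInstanceAs (CompleteSpace (n → n → 𝕜)))
  have hnorm : ‖A‖₊ < 1 := by
    rw [linfty_opNNNorm_def, Finset.sup_lt_iff zero_lt_one]
    exact fun i _ => by simpa [← NNReal.coe_lt_coe] using hA i
  rw [nonsing_inv_eq_ringInverse]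
  exact hasSum_geom_series_inverse A hnorm

theorem hasSum_pow_of_col_sum_norm_lt_one (A : Matrix n n 𝕜) (hA : ∀ j, ∑ i, ‖A i j‖ < 1) :
    HasSum (fun k => A ^ k) (1 - A)⁻¹ := by
  simpa [transpose_pow, transpose_nonsing_inv] using
    (hasSum_pow_of_row_sum_norm_lt_one Aᵀ hA).matrix_transpose

end Matrix

theorem stmt_10 {N : ℕ} (M : Matrix (Fin N) (Fin N) ℝ) (u : Fin N → ℝ)
    (hM : ∀ i j, 0 ≤ M i j) (hu : ∀ i, 0 < u i) :
    HasSum (fun k : ℕ => (M.transpose * Du M u) ^ k)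
      (1 - M.transpose * Du M u)⁻¹ := by
  refine Matrix.hasSum_pow_of_col_sum_norm_lt_one _ fun j => ?_
  have hpos : 0 < (∑ i, M j i) + u j :=
    add_pos_of_nonneg_of_pos (Finset.sum_nonneg fun i _ => hM j i) (hu j)
  calc ∑ i, ‖(M.transpose * Du M u) i j‖ = (∑ i, M j i) / ((∑ i, M j i) + u j) := by
        simp only [Du, Matrix.mul_diagonal, Matrix.transpose_apply, Real.norm_eq_abs,
          div_eq_mul_inv, Finset.sum_mul]
        exact Finset.sum_congr rfl fun i _ =>
          abs_of_nonneg (mul_nonneg (hM j i) (inv_nonneg.2 hpos.le))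
    _ < 1 := (div_lt_one hpos).2 (lt_add_of_pos_right _ (hu j))
end

section
/- Let M be an N×N real matrix with nonnegative entries, u ∈ ℝ^N with strictly positive entries, v ∈ ℝ^N, D(u) = diag(Me + u)^{-1}, and ρ = max_i (Me)_i / ((Me)_i + u_i) < 1. Let x* be the unique solution of (I − Mᵀ D(u)) x̄ = v, and define the iteration x^{(k+1)ᵀ} = x^{(k)ᵀ} D(u) M + vᵀ from any starting vector x^{(0)} ∈ ℝ^N. Then for every k ≥ 0, ‖x^{(k)} − x*‖₁ ≤ ρ^k ‖x^{(0)} − x*‖₁; in particular the iterates x^{(k)} converge to x*. -/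
theorem stmt_11 {N : ℕ} (M : Matrix (Fin N) (Fin N) ℝ) (u v : Fin N → ℝ)
    (hM : ∀ i j, 0 ≤ M i j) (hu : ∀ i, 0 < u i)
    (xstar : Fin N → ℝ)
    (hxstar : Matrix.mulVec (1 - M.transpose * Du M u) xstar = v)
    (x : ℕ → Fin N → ℝ)
    (hx : ∀ k, x (k + 1) = Matrix.vecMul (x k) (Du M u * M) + v) :
    (⨆ i : Fin N, (∑ j, M i j) / ((∑ j, M i j) + u i)) < 1 ∧
      (∀ k : ℕ, ∑ i, |x k i - xstar i| ≤
        (⨆ i : Fin N, (∑ j, M i j) / ((∑ j, M i j) + u i)) ^ k *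
          ∑ i, |x 0 i - xstar i|) ∧
      Filter.Tendsto x Filter.atTop (nhds xstar) := by
  set s : Fin N → ℝ := fun i => ∑ j, M i j with hs
  have hs0 : ∀ i, 0 ≤ s i := fun i => Finset.sum_nonneg fun j _ => hM i j
  have hsu : ∀ i, 0 < s i + u i := fun i => add_pos_of_nonneg_of_pos (hs0 i) (hu i)
  set f : Fin N → ℝ := fun i => s i / (s i + u i) with hf
  have hf1 : ∀ i, f i < 1 := fun i => (div_lt_one (hsu i)).2 (lt_add_of_pos_right _ (hu i))
  have hf0 : ∀ i, 0 ≤ f i := fun i => div_nonneg (hs0 i) (hsu i).le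
  set ρ : ℝ := ⨆ i, f i with hρ
  have hbdd : BddAbove (Set.range f) := Set.Finite.bddAbove (Set.finite_range f)
  have hρ1 : ρ < 1 := by
    rcases isEmpty_or_nonempty (Fin N) with h | h
    · simp [hρ, Real.iSup_of_isEmpty]
    · obtain ⟨i, hi⟩ := exists_eq_ciSup_of_finite (f := f)
      rw [hρ, ← hi]; exact hf1 i
  have hρ0 : 0 ≤ ρ := by
    rcases isEmpty_or_nonempty (Fin N) with h | h
    · simp [hρ, Real.iSup_of_isEmpty]
    · exact le_trans (hf0 (Classical.arbitrary _)) (le_ciSup hbdd _)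
  have hfρ : ∀ i, f i ≤ ρ := fun i => le_ciSup hbdd i
  -- fixed point equation
  have hxs : xstar = Matrix.vecMul xstar (Du M u * M) + v := by
    have h1 : Matrix.mulVec (1 - M.transpose * Du M u) xstar
        = xstar - Matrix.vecMul xstar (Du M u * M) := by
      rw [Matrix.sub_mulVec, Matrix.one_mulVec]
      congr 1
      have : M.transpose * Du M u = (Du M u * M).transpose := by
        rw [Matrix.transpose_mul]
        congr 1
        exact (Matrix.diagonal_transpose _).symm
      rw [this, Matrix.mulVec_transpose]
    rw [h1] at hxstar
    have := hxstar
    abel_nf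
    rw [← hxstar]
    abel
  -- one-step contraction
  have key : ∀ k, ∑ i, |x (k+1) i - xstar i| ≤ ρ * ∑ i, |x k i - xstar i| := by
    intro k
    have hvec : x (k+1) - xstar = Matrix.vecMul (x k - xstar) (Du M u * M) := by
      rw [hx k, Matrix.sub_vecMul]
      conv_lhs => rw [hxs]
      abel
    have hdiff : ∀ j, x (k+1) j - xstar j
        = ∑ i, (x k i - xstar i) * (Du M u * M) i j := by
      intro j
      have := congrFun hvec j
      simpa [Matrix.vecMul, dotProduct] using this
    have hA : ∀ i j, (Du M u * M) i j = (s i + u i)⁻¹ * M i j := by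
      intro i j
      rw [show Du M u = Matrix.diagonal fun i => (s i + u i)⁻¹ from rfl,
        Matrix.diagonal_mul]
    calc ∑ j, |x (k+1) j - xstar j|
        ≤ ∑ j, ∑ i, |x k i - xstar i| * (Du M u * M) i j := by
          refine Finset.sum_le_sum fun j _ => ?_
          rw [hdiff j]
          refine (Finset.abs_sum_le_sum_abs _ _).trans ?_
          refine Finset.sum_le_sum fun i _ => ?_
          have hAnn : 0 ≤ (Du M u * M) i j := by
            rw [hA]; exact mul_nonneg (inv_nonneg.2 (hsu i).le) (hM i j)
          rw [abs_mul, abs_of_nonneg hAnn]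
      _ = ∑ i, |x k i - xstar i| * f i := by
          rw [Finset.sum_comm]
          refine Finset.sum_congr rfl fun i _ => ?_
          rw [← Finset.mul_sum]
          congr 1
          simp only [hA, ← Finset.mul_sum]
          show _ = s i / (s i + u i)
          rw [div_eq_inv_mul]
      _ ≤ ∑ i, |x k i - xstar i| * ρ := by
          refine Finset.sum_le_sum fun i _ => ?_
          exact mul_le_mul_of_nonneg_left (hfρ i) (abs_nonneg _)
      _ = ρ * ∑ i, |x k i - xstar i| := by rw [← Finset.sum_mul, mul_comm]
  have main : ∀ k, ∑ i, |x k i - xstar i| ≤ ρ ^ k * ∑ i, |x 0 i - xstar i| := by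
    intro k
    induction k with
    | zero => simp
    | succ n ih =>
        calc ∑ i, |x (n+1) i - xstar i| ≤ ρ * ∑ i, |x n i - xstar i| := key n
          _ ≤ ρ * (ρ ^ n * ∑ i, |x 0 i - xstar i|) := by
              exact mul_le_mul_of_nonneg_left ih hρ0
          _ = ρ ^ (n+1) * ∑ i, |x 0 i - xstar i| := by ring
  refine ⟨hρ1, main, ?_⟩
  rw [tendsto_pi_nhds]
  intro i
  rw [tendsto_iff_dist_tendsto_zero]
  simp only [Real.dist_eq]
  have hg : Filter.Tendsto (fun k => ρ ^ k * ∑ i, |x 0 i - xstar i|)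
      Filter.atTop (nhds 0) := by
    simpa using (tendsto_pow_atTop_nhds_zero_of_lt_one hρ0 hρ1).mul_const
      (∑ i, |x 0 i - xstar i|)
  exact squeeze_zero (fun k => abs_nonneg _)
    (fun k => (Finset.single_le_sum (fun j _ => abs_nonneg (x k j - xstar j))
      (Finset.mem_univ i)).trans (main k)) hg
end

section
/- Let m ≥ 1, n ≥ 1, let C be an n×n real matrix with nonnegative entries, and let Â₀ be the (m+n+1)×(m+n+1) block matrix [[0_{m×m}, 0_{m×n}, e_m],[0_{n×m}, C, e_n],[e_mᵀ, e_nᵀ, 0]] (the limit of the Simple Heap model as the feature weights tend to zero), and let P₀ = diag(Â₀ e)^{-1} Â₀ be its row-normalization. If x ∈ ℝ^{m+n+1} is a nonnegative vector with xᵀ P₀ = xᵀ, then all m feature components of x are equal; more precisely, each feature component of x equals x_{m+n+1}/(m+n), where x_{m+n+1} is the component of x at the dummy node. -/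
/-- The limit matrix `Â₀ = [[0,0,e_m],[0,C,e_n],[e_mᵀ,e_nᵀ,0]]` of the Simple Heap
model as the feature weights tend to zero.  Coordinates are grouped as `m` feature
components, then `n` item components, then one dummy component. -/
def A0 {m n : ℕ} (C : Matrix (Fin n) (Fin n) ℝ) :
    Matrix (Fin m ⊕ Fin n ⊕ Unit) (Fin m ⊕ Fin n ⊕ Unit) ℝ := fun i j =>
  match i, j with
  | Sum.inl _, Sum.inr (Sum.inr _) => 1
  | Sum.inl _, _ => 0
  | Sum.inr (Sum.inl a), Sum.inr (Sum.inl b) => C a b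
  | Sum.inr (Sum.inl _), Sum.inr (Sum.inr _) => 1
  | Sum.inr (Sum.inl _), Sum.inl _ => 0
  | Sum.inr (Sum.inr _), Sum.inr (Sum.inr _) => 0
  | Sum.inr (Sum.inr _), _ => 1

theorem stmt_13 {m n : ℕ} (hm : 1 ≤ m) (hn : 1 ≤ n)
    (C : Matrix (Fin n) (Fin n) ℝ) (hC : ∀ i j, 0 ≤ C i j)
    (x : Fin m ⊕ Fin n ⊕ Unit → ℝ) (hx : ∀ i, 0 ≤ x i)
    (hfix : Matrix.vecMul x (rowNorm (A0 (m := m) C)) = x) :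
    (∀ a b : Fin m, x (Sum.inl a) = x (Sum.inl b)) ∧
      ∀ a : Fin m,
        x (Sum.inl a) = x (Sum.inr (Sum.inr ())) / ((m : ℝ) + (n : ℝ)) := by
  have key : ∀ a : Fin m,
      x (Sum.inl a) = x (Sum.inr (Sum.inr ())) / ((m : ℝ) + (n : ℝ)) := by
    intro a
    have h := congrFun hfix (Sum.inl a)
    rw [Matrix.vecMul, dotProduct] at h
    rw [Fintype.sum_sum_type, Fintype.sum_sum_type] at h
    have hrn : ∀ i j, rowNorm (A0 (m := m) C) i j
        = (∑ k, A0 (m := m) C i k)⁻¹ * A0 (m := m) C i j := by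
      intro i j
      simp [rowNorm, Matrix.mul_apply, Matrix.diagonal, Finset.mul_sum]
    simp only [hrn] at h
    have h1 : ∀ i : Fin m, A0 (m := m) C (Sum.inl i) (Sum.inl a) = 0 := fun i => rfl
    have h2 : ∀ i : Fin n, A0 (m := m) C (Sum.inr (Sum.inl i)) (Sum.inl a) = 0 :=
      fun i => rfl
    have h3 : A0 (m := m) C (Sum.inr (Sum.inr ())) (Sum.inl a) = 1 := rfl
    have hrow : (∑ k, A0 (m := m) C (Sum.inr (Sum.inr ())) k) = (m : ℝ) + (n : ℝ) := by
      rw [Fintype.sum_sum_type, Fintype.sum_sum_type]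
      have e1 : ∀ i : Fin m, A0 (m := m) C (Sum.inr (Sum.inr ())) (Sum.inl i) = 1 :=
        fun i => rfl
      have e2 : ∀ i : Fin n,
          A0 (m := m) C (Sum.inr (Sum.inr ())) (Sum.inr (Sum.inl i)) = 1 := fun i => rfl
      have e3 : A0 (m := m) C (Sum.inr (Sum.inr ())) (Sum.inr (Sum.inr ())) = 0 := rfl
      simp [e1, e2, e3]
    simp only [h1, h2, h3, mul_zero, mul_one, Finset.sum_const_zero, add_zero,
      zero_add, Finset.univ_unique, Finset.sum_singleton] at h
    rw [hrow] at h
    rw [div_eq_inv_mul, mul_comm]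
    convert h.symm using 2
  exact ⟨fun a b => by rw [key a, key b], key⟩
end

section
/- Let m ≥ 1, n ≥ 1, let C be an n×n real matrix with nonnegative entries, let Ĉ be the (n+1)×(n+1) augmented citation matrix and P̂ = diag(Ĉe)^{-1} Ĉ its row-normalization, and let Â₀ = [[0_{m×m}, 0_{m×n}, e_m],[0_{n×m}, C, e_n],[e_mᵀ, e_nᵀ, 0]] with row-normalization P₀ = diag(Â₀ e)^{-1} Â₀. Suppose y = (y_1, …, y_n, y_d) ∈ ℝ^{n+1} satisfies yᵀ P̂ = yᵀ. Define x ∈ ℝ^{m+n+1} by: each of the m feature components of x equals y_d/n, the item components of x are x_i = y_i for 1 ≤ i ≤ n, and the dummy component is x_{m+n+1} = y_d·(m+n)/n. Then xᵀ P₀ = xᵀ. In particular, in the limit model the items receive (up to a scaling factor) the same rank as in the one-class model, while all features receive a uniform score. -/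
/-- The augmented citation matrix `Ĉ`: a dummy node `n+1` is added which cites
and is cited by all existing nodes, but not itself. -/
def hatC {n : ℕ} (C : Matrix (Fin n) (Fin n) ℝ) :
    Matrix (Fin (n + 1)) (Fin (n + 1)) ℝ := fun i j =>
  if hi : (i : ℕ) < n then
    if hj : (j : ℕ) < n then C ⟨i, hi⟩ ⟨j, hj⟩ else 1
  else if (j : ℕ) < n then 1 else 0

/-!
Item rows of `Â₀` and `Ĉ` have the same row sums and the same item columns, so the items
pass mass to items exactly as in the one-class model. The dummy of `Ĉ` sends `y_d / n` to
each item; in `Â₀` it has `m + n` out-neighbours, which is why its score is scaled by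
`(m + n) / n`, and it then sends the same `y_d / n` to every item and every feature. The
features only feed back into the dummy, which therefore collects `m y_d / n + y_d`.
-/

open Matrix

theorem vecMul_rowNorm_apply {ι : Type*} [Fintype ι] [DecidableEq ι] (x : ι → ℝ)
    (A : Matrix ι ι ℝ) (j : ι) :
    vecMul x (rowNorm A) j = ∑ i, x i / (∑ k, A i k) * A i j := by
  simp only [vecMul, dotProduct, rowNorm, diagonal_mul, div_eq_mul_inv, mul_assoc]

section hatC

variable {n : ℕ} (C : Matrix (Fin n) (Fin n) ℝ) (y : Fin (n + 1) → ℝ)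

theorem hatC_rowSum_castSucc (a : Fin n) :
    ∑ k, hatC C a.castSucc k = ∑ b, C a b + 1 := by
  rw [Fin.sum_univ_castSucc]
  simp [hatC]

theorem hatC_rowSum_last : ∑ k, hatC C (Fin.last n) k = n := by
  rw [Fin.sum_univ_castSucc]
  simp [hatC]

theorem vecMul_rowNorm_hatC_castSucc (j : Fin n) :
    vecMul y (rowNorm (hatC C)) j.castSucc =
      ∑ a, y a.castSucc / (∑ b, C a b + 1) * C a j + y (Fin.last n) / n := by
  rw [vecMul_rowNorm_apply, Fin.sum_univ_castSucc, hatC_rowSum_last]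
  simp only [hatC_rowSum_castSucc]
  simp [hatC]

theorem vecMul_rowNorm_hatC_last :
    vecMul y (rowNorm (hatC C)) (Fin.last n) = ∑ a, y a.castSucc / (∑ b, C a b + 1) := by
  rw [vecMul_rowNorm_apply, Fin.sum_univ_castSucc]
  simp only [hatC_rowSum_castSucc]
  simp [hatC]

end hatC

section A0

variable {m n : ℕ} (C : Matrix (Fin n) (Fin n) ℝ) (x : Fin m ⊕ Fin n ⊕ Unit → ℝ)

theorem vecMul_rowNorm_A0_feature (f : Fin m) :
    vecMul x (rowNorm (A0 C)) (Sum.inl f) = x (Sum.inr (Sum.inr ())) / (m + n) := by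
  simp [vecMul_rowNorm_apply, Fintype.sum_sum_type, A0]

theorem vecMul_rowNorm_A0_item (j : Fin n) :
    vecMul x (rowNorm (A0 C)) (Sum.inr (Sum.inl j)) =
      ∑ a, x (Sum.inr (Sum.inl a)) / (∑ b, C a b + 1) * C a j +
        x (Sum.inr (Sum.inr ())) / (m + n) := by
  simp [vecMul_rowNorm_apply, Fintype.sum_sum_type, A0]

theorem vecMul_rowNorm_A0_dummy :
    vecMul x (rowNorm (A0 C)) (Sum.inr (Sum.inr ())) =
      ∑ f, x (Sum.inl f) + ∑ a, x (Sum.inr (Sum.inl a)) / (∑ b, C a b + 1) := by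
  simp [vecMul_rowNorm_apply, Fintype.sum_sum_type, A0]

end A0

theorem stmt_14_general {m n : ℕ} (hn : 1 ≤ n)
    (C : Matrix (Fin n) (Fin n) ℝ)
    (y : Fin (n + 1) → ℝ)
    (hy : Matrix.vecMul y (rowNorm (hatC C)) = y) :
    Matrix.vecMul
        (Sum.elim (fun _ : Fin m => y (Fin.last n) / (n : ℝ))
          (Sum.elim (fun i : Fin n => y i.castSucc)
            (fun _ : Unit => y (Fin.last n) * ((m : ℝ) + (n : ℝ)) / (n : ℝ))))
        (rowNorm (A0 (m := m) C)) =
      Sum.elim (fun _ : Fin m => y (Fin.last n) / (n : ℝ))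
        (Sum.elim (fun i : Fin n => y i.castSucc)
          (fun _ : Unit => y (Fin.last n) * ((m : ℝ) + (n : ℝ)) / (n : ℝ))) := by
  have hn₀ : (n : ℝ) ≠ 0 := by positivity
  have hmn₀ : (m : ℝ) + n ≠ 0 := by positivity
  have hitem (j : Fin n) := (vecMul_rowNorm_hatC_castSucc C y j).symm.trans (congrFun hy _)
  have hdummy := (vecMul_rowNorm_hatC_last C y).symm.trans (congrFun hy _)
  ext (f | j | u)
  · rw [vecMul_rowNorm_A0_feature]
    simp only [Sum.elim_inl, Sum.elim_inr]
    field_simp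
  · rw [vecMul_rowNorm_A0_item]
    simp only [Sum.elim_inl, Sum.elim_inr]
    rw [← hitem j]
    field_simp
  · rw [vecMul_rowNorm_A0_dummy]
    simp only [Sum.elim_inl, Sum.elim_inr, Finset.sum_const, Finset.card_univ, Fintype.card_fin,
      nsmul_eq_mul, hdummy]
    field_simp

theorem stmt_14 {m n : ℕ} (hm : 1 ≤ m) (hn : 1 ≤ n)
    (C : Matrix (Fin n) (Fin n) ℝ) (hC : ∀ i j, 0 ≤ C i j)
    (y : Fin (n + 1) → ℝ)
    (hy : Matrix.vecMul y (rowNorm (hatC C)) = y) :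
    Matrix.vecMul
        (Sum.elim (fun _ : Fin m => y (Fin.last n) / (n : ℝ))
          (Sum.elim (fun i : Fin n => y i.castSucc)
            (fun _ : Unit => y (Fin.last n) * ((m : ℝ) + (n : ℝ)) / (n : ℝ))))
        (rowNorm (A0 (m := m) C)) =
      Sum.elim (fun _ : Fin m => y (Fin.last n) / (n : ℝ))
        (Sum.elim (fun i : Fin n => y i.castSucc)
          (fun _ : Unit => y (Fin.last n) * ((m : ℝ) + (n : ℝ)) / (n : ℝ))) :=
  stmt_14_general hn C y hy
end
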